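/- Let a < b < c be real numbers. Then the limit as t → 0⁺ of t^(−1/2) ∫_a^c (χ_{(a,b)}(x) − ∫_a^b p_t(x,y) dy) dx exists and equals 1/√π, where χ_{(a,b)} denotes the characteristic function of the open interval (a,b). -/

import Mathlib

/-!
With `σ = 2√t`, the heat flow of `χ_(a,b)` is `(E((x-a)/σ) - E((x-b)/σ)) / √π`, where
`E z = ∫₀ᶻ exp(-s²)` (`gaussPrimitive`), and `E` has the explicit primitive
`Ψ z = z E z + exp(-z²)/2` (`gaussPrimitive₂`). So the integral over `(a,c)` is explicit.
Writing `Ψ z = √π z / 2 + R z` (`gaussRemainder`) with `0 ≤ R z ≤ exp(-z²)/2` for `z ≥ 0`, and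
using that `Ψ` is even, the linear parts cancel against `b - a`, the remainders vanish as
`σ → 0`, and only `Ψ 0 = 1/2`, from the shared endpoint `a`, survives.
-/

open MeasureTheory Real Filter

noncomputable def heatKernel (t x y : ℝ) : ℝ :=
  (4 * Real.pi * t) ^ (-(1 : ℝ) / 2) * Real.exp (-(x - y) ^ 2 / (4 * t))

open Set Topology

theorem integral_comp_sub_div_eq_sub_of_hasDerivAt {F f : ℝ → ℝ}
    (hF : ∀ z, HasDerivAt F (f z) z) (hf : Continuous f) {σ : ℝ} (hσ : σ ≠ 0)
    (a p q : ℝ) :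
    ∫ x in p..q, f ((x - a) / σ) = σ * (F ((q - a) / σ) - F ((p - a) / σ)) := by
  have hderiv (x : ℝ) : HasDerivAt (fun x ↦ σ * F ((x - a) / σ)) (f ((x - a) / σ)) x := by
    refine (((hF _).comp x (((hasDerivAt_id' x).sub_const a).div_const σ)).const_mul
      σ).congr_deriv ?_
    field_simp
  rw [intervalIntegral.integral_eq_sub_of_hasDerivAt (fun x _ ↦ hderiv x)
    ((hf.comp (by fun_prop)).intervalIntegrable p q)]
  ring

theorem integral_indicator_Ioo_one {a b c : ℝ} (hab : a ≤ b) (hbc : b ≤ c) :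
    ∫ x in a..c, (Ioo a b).indicator (fun _ ↦ (1 : ℝ)) x = b - a := by
  rw [intervalIntegral.integral_of_le (hab.trans hbc), setIntegral_indicator measurableSet_Ioo,
    inter_eq_self_of_subset_right (Ioo_subset_Ioc_self.trans (Ioc_subset_Ioc_right hbc))]
  simp [hab]

theorem rpow_neg_one_half_eq_inv_sqrt {t : ℝ} (ht : 0 ≤ t) :
    t ^ (-(1 : ℝ) / 2) = (√t)⁻¹ := by
  rw [neg_div, rpow_neg ht, sqrt_eq_rpow]

theorem tendsto_div_two_mul_sqrt_nhdsGT_zero_atTop {d : ℝ} (hd : 0 < d) :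
    Tendsto (fun t ↦ d / (2 * √t)) (𝓝[>] 0) atTop := by
  refine ((tendsto_rpow_neg_nhdsGT_zero (by norm_num : -(1 : ℝ) / 2 < 0)).const_mul_atTop
    (half_pos hd)).congr' ?_
  filter_upwards [self_mem_nhdsWithin] with t ht
  rw [rpow_neg_one_half_eq_inv_sqrt (le_of_lt ht)]
  field_simp

noncomputable def gaussPrimitive (z : ℝ) : ℝ := ∫ s in (0 : ℝ)..z, exp (-s ^ 2)

noncomputable def gaussPrimitive₂ (z : ℝ) : ℝ := z * gaussPrimitive z + exp (-z ^ 2) / 2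

noncomputable def gaussRemainder (z : ℝ) : ℝ := gaussPrimitive₂ z - √π / 2 * z

theorem hasDerivAt_gaussPrimitive (z : ℝ) : HasDerivAt gaussPrimitive (exp (-z ^ 2)) z :=
  ((by fun_prop : Continuous fun s : ℝ ↦ exp (-s ^ 2)).integral_hasStrictDerivAt 0 z).hasDerivAt

@[fun_prop]
theorem continuous_gaussPrimitive : Continuous gaussPrimitive :=
  continuous_iff_continuousAt.2 fun z ↦ (hasDerivAt_gaussPrimitive z).continuousAt

theorem gaussPrimitive_neg (z : ℝ) : gaussPrimitive (-z) = -gaussPrimitive z := by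
  have h := intervalIntegral.integral_comp_neg (a := 0) (b := z) fun s : ℝ ↦ exp (-s ^ 2)
  simp only [neg_sq, neg_zero] at h
  rw [gaussPrimitive, gaussPrimitive, h, intervalIntegral.integral_symm]

theorem tendsto_gaussPrimitive_atTop : Tendsto gaussPrimitive atTop (𝓝 (√π / 2)) := by
  have h := intervalIntegral_tendsto_integral_Ioi 0
    ((integrable_exp_neg_mul_sq one_pos).integrableOn (s := Ioi 0)) tendsto_id
  have hgauss := integral_gaussian_Ioi 1
  simp only [one_mul, neg_mul, div_one] at h hgauss
  rwa [hgauss] at h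

theorem integral_Ioi_exp_neg_sq (z : ℝ) :
    ∫ s in Ioi z, exp (-s ^ 2) = √π / 2 - gaussPrimitive z :=
  integral_Ioi_of_hasDerivAt_of_tendsto' (fun x _ ↦ hasDerivAt_gaussPrimitive x)
    (by simpa using (integrable_exp_neg_mul_sq one_pos).integrableOn) tendsto_gaussPrimitive_atTop

theorem hasDerivAt_gaussPrimitive₂ (z : ℝ) :
    HasDerivAt gaussPrimitive₂ (gaussPrimitive z) z := by
  refine (((hasDerivAt_id' z).fun_mul (hasDerivAt_gaussPrimitive z)).fun_add
    ((hasDerivAt_pow 2 z).fun_neg.exp.div_const 2)).congr_deriv ?_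
  simp only [Nat.cast_ofNat]
  ring

theorem gaussPrimitive₂_neg (z : ℝ) : gaussPrimitive₂ (-z) = gaussPrimitive₂ z := by
  simp only [gaussPrimitive₂, gaussPrimitive_neg, neg_sq, neg_mul_neg]

theorem gaussPrimitive₂_zero : gaussPrimitive₂ 0 = 1 / 2 := by
  simp [gaussPrimitive₂]

theorem gaussRemainder_eq (z : ℝ) :
    gaussRemainder z = exp (-z ^ 2) / 2 - z * ∫ s in Ioi z, exp (-s ^ 2) := by
  rw [integral_Ioi_exp_neg_sq, gaussRemainder, gaussPrimitive₂]
  ring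

theorem mul_integral_Ioi_exp_neg_sq_le (z : ℝ) :
    z * ∫ s in Ioi z, exp (-s ^ 2) ≤ exp (-z ^ 2) / 2 := by
  have hprim (s : ℝ) : HasDerivAt (fun s ↦ -(exp (-s ^ 2) / 2)) (s * exp (-s ^ 2)) s := by
    refine ((hasDerivAt_pow 2 s).fun_neg.exp.div_const 2).fun_neg.congr_deriv ?_
    simp only [Nat.cast_ofNat]
    ring
  have hlim : Tendsto (fun s : ℝ ↦ -(exp (-s ^ 2) / 2)) atTop (𝓝 0) := by
    simpa using ((tendsto_exp_neg_atTop_nhds_zero.comp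
      (tendsto_pow_atTop two_ne_zero)).div_const 2).neg
  have hint : IntegrableOn (fun s : ℝ ↦ s * exp (-s ^ 2)) (Ioi z) := by
    simpa using (integrable_mul_exp_neg_mul_sq one_pos).integrableOn
  calc z * ∫ s in Ioi z, exp (-s ^ 2)
      = ∫ s in Ioi z, z * exp (-s ^ 2) := (integral_const_mul _ _).symm
    _ ≤ ∫ s in Ioi z, s * exp (-s ^ 2) :=
        setIntegral_mono_on
          (by simpa using ((integrable_exp_neg_mul_sq one_pos).const_mul z).integrableOn)
          hint measurableSet_Ioi fun s hs ↦ mul_le_mul_of_nonneg_right hs.le (exp_pos _).le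
    _ = exp (-z ^ 2) / 2 := by
        rw [integral_Ioi_of_hasDerivAt_of_tendsto' (fun s _ ↦ hprim s) hint hlim]
        ring

theorem tendsto_gaussRemainder_atTop : Tendsto gaussRemainder atTop (𝓝 0) := by
  have hexp : Tendsto (fun z : ℝ ↦ exp (-z ^ 2) / 2) atTop (𝓝 0) := by
    simpa using (tendsto_exp_neg_atTop_nhds_zero.comp
      (tendsto_pow_atTop two_ne_zero)).div_const 2
  refine tendsto_of_tendsto_of_tendsto_of_le_of_le' tendsto_const_nhds hexp ?_ ?_
  · exact Eventually.of_forall fun z ↦ by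
      linarith [gaussRemainder_eq z, mul_integral_Ioi_exp_neg_sq_le z]
  · filter_upwards [eventually_ge_atTop 0] with z hz
    have htail : 0 ≤ ∫ s in Ioi z, exp (-s ^ 2) :=
      setIntegral_nonneg measurableSet_Ioi fun s _ ↦ (exp_pos _).le
    linarith [gaussRemainder_eq z, mul_nonneg hz htail]

theorem heatKernel_eq {t : ℝ} (ht : 0 < t) (x y : ℝ) :
    heatKernel t x y = exp (-((y - x) / (2 * √t)) ^ 2) / (√π * (2 * √t)) := by
  have hsqrt : √(4 * π * t) = √π * (2 * √t) := by
    rw [show 4 * π * t = π * (2 ^ 2 * t) by ring, sqrt_mul pi_pos.le,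
      sqrt_mul (by positivity), sqrt_sq zero_le_two]
  rw [heatKernel, rpow_neg_one_half_eq_inv_sqrt (by positivity), hsqrt, div_pow, mul_pow,
    sq_sqrt ht.le]
  field_simp
  ring_nf

theorem integral_heatKernel {t : ℝ} (ht : 0 < t) (x a b : ℝ) :
    ∫ y in a..b, heatKernel t x y =
      (gaussPrimitive ((x - a) / (2 * √t)) - gaussPrimitive ((x - b) / (2 * √t))) / √π := by
  have hσ : 2 * √t ≠ 0 := by positivity
  simp_rw [heatKernel_eq ht, intervalIntegral.integral_div]
  rw [integral_comp_sub_div_eq_sub_of_hasDerivAt (f := fun z ↦ exp (-z ^ 2))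
    hasDerivAt_gaussPrimitive (by fun_prop) hσ, ← neg_sub x b, ← neg_sub x a, neg_div, neg_div,
    gaussPrimitive_neg, gaussPrimitive_neg]
  field_simp
  ring

theorem integral_integral_heatKernel {t : ℝ} (ht : 0 < t) (a b c : ℝ) :
    ∫ x in a..c, ∫ y in a..b, heatKernel t x y =
      2 * √t / √π * (gaussPrimitive₂ ((c - a) / (2 * √t))
        - gaussPrimitive₂ ((c - b) / (2 * √t)) + gaussPrimitive₂ ((b - a) / (2 * √t)) - 1 / 2) := by
  have hσ : 2 * √t ≠ 0 := by positivity
  have hint (d : ℝ) :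
      IntervalIntegrable (fun x ↦ gaussPrimitive ((x - d) / (2 * √t))) volume a c :=
    (by fun_prop : Continuous _).intervalIntegrable a c
  simp_rw [integral_heatKernel ht, intervalIntegral.integral_div]
  have hΨ := integral_comp_sub_div_eq_sub_of_hasDerivAt hasDerivAt_gaussPrimitive₂
    continuous_gaussPrimitive hσ
  rw [intervalIntegral.integral_sub (hint a) (hint b), hΨ, hΨ, sub_self, zero_div,
    gaussPrimitive₂_zero, ← neg_sub b a, neg_div, gaussPrimitive₂_neg]
  field_simp
  ring

theorem rpow_neg_one_half_mul_integral_sub_heatKernel {a b c t : ℝ} (hab : a ≤ b)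
    (hbc : b ≤ c) (ht : 0 < t) :
    t ^ (-(1 : ℝ) / 2) * ∫ x in a..c,
        ((Ioo a b).indicator (fun _ ↦ (1 : ℝ)) x - ∫ y in a..b, heatKernel t x y) =
      1 / √π - 2 / √π * (gaussRemainder ((c - a) / (2 * √t))
        - gaussRemainder ((c - b) / (2 * √t)) + gaussRemainder ((b - a) / (2 * √t))) := by
  have hind : IntervalIntegrable ((Ioo a b).indicator fun _ ↦ (1 : ℝ)) volume a c :=
    ((integrable_indicator_iff measurableSet_Ioo).2
      (integrableOn_const measure_Ioo_lt_top.ne)).intervalIntegrable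
  have hheat : IntervalIntegrable (fun x ↦ ∫ y in a..b, heatKernel t x y) volume a c := by
    simp_rw [integral_heatKernel ht]
    exact (by fun_prop : Continuous _).intervalIntegrable a c
  have hσ : 0 < √t := sqrt_pos.2 ht
  rw [intervalIntegral.integral_sub hind hheat, integral_indicator_Ioo_one hab hbc,
    integral_integral_heatKernel ht, rpow_neg_one_half_eq_inv_sqrt ht.le]
  simp only [gaussRemainder]
  field_simp
  ring

/-- Bilinear limit formula for `E = (a,b)` and `F = (a,c)`, sharing the boundary point `a`. -/
theorem stmt_8 (a b c : ℝ) (hab : a < b) (hbc : b < c) :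
    Tendsto (fun t : ℝ => t ^ (-(1 : ℝ) / 2) *
        ∫ x in a..c,
          (Set.indicator (Set.Ioo a b) (fun _ => (1 : ℝ)) x - ∫ y in a..b, heatKernel t x y))
      (nhdsWithin 0 (Set.Ioi 0)) (nhds (1 / Real.sqrt Real.pi)) := by
  have hR {d : ℝ} (hd : 0 < d) :
      Tendsto (fun t ↦ gaussRemainder (d / (2 * √t))) (𝓝[>] 0) (𝓝 0) :=
    tendsto_gaussRemainder_atTop.comp (tendsto_div_two_mul_sqrt_nhdsGT_zero_atTop hd)
  have hlim := (((hR (sub_pos.2 (hab.trans hbc))).sub (hR (sub_pos.2 hbc))).add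
    (hR (sub_pos.2 hab))).const_mul (2 / √π) |>.const_sub (1 / √π)
  rw [sub_zero, add_zero, mul_zero, sub_zero] at hlim
  refine hlim.congr' ?_
  filter_upwards [self_mem_nhdsWithin] with t ht
  exact (rpow_neg_one_half_mul_integral_sub_heatKernel hab.le hbc.le ht).symm
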